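/- arXiv:1709.09947 — 2 statements merged into one kernel-verified Lean document; each statement's English description precedes it below -/
import Mathlib

section
/- (Hardy–Littlewood type lemma) Let D ⊆ ℝᴺ be a convex bounded open set and F : D → ℝᴹ a differentiable map such that ‖DF(x)‖ ≤ C/√(dist(x, ∂D)) for all x ∈ D, where C > 0. Then F extends continuously to the closure of D and there is a constant C' (depending only on C and the diameter of D) such that ‖F(x) − F(y)‖ ≤ C'·‖x − y‖^{1/2} for all x, y ∈ D. -/
/-!
Fix a ball `ball p ρ ⊆ D`. By convexity, `lineMap x p t = (1 - t) • x + t • p` is the centre of a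
ball of radius `t ρ` inside `D` for every `x ∈ D`, so there `‖DF‖ ≤ C / √(t ρ)`. Integrating this
bound along the segment from `x` towards `p` gives `‖F (lineMap x p t) - F x‖ = O(√t)`, and the
mean value inequality on the convex set `homothety p (1 - t) '' D` gives
`‖F (lineMap x p t) - F (lineMap y p t)‖ = O(‖x - y‖ / √t)`. With `t = ‖x - y‖ / diam D` both are
`O(√‖x - y‖)`. A Hölder map is uniformly continuous, so it extends continuously to the closure.
-/

open Metric Set Filter Topology AffineMap

theorem UniformContinuousOn.exists_continuousOn_closure_eqOn {α β : Type*} [UniformSpace α]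
    [UniformSpace β] [CompleteSpace β] [T0Space β] {f : α → β} {s : Set α}
    (hf : UniformContinuousOn f s) : ∃ g : α → β, ContinuousOn g (closure s) ∧ EqOn g f s := by
  refine ⟨extendFrom s f, continuousOn_extendFrom subset_rfl fun z hz => ?_,
    extendFrom_extends hf.continuousOn⟩
  have : (𝓝[s] z).NeBot := mem_closure_iff_nhdsWithin_neBot.mp hz
  have hcauchy : Cauchy (𝓝[s] z) := cauchy_nhds.mono nhdsWithin_le_nhds
  exact CompleteSpace.complete (hcauchy.map_of_le hf inf_le_right)

theorem uniformContinuousOn_of_dist_le_mul_rpow {α β : Type*} [PseudoMetricSpace α]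
    [PseudoMetricSpace β] {f : α → β} {s : Set α} {K r : ℝ} (hr : 0 < r)
    (h : ∀ x ∈ s, ∀ y ∈ s, dist (f x) (f y) ≤ K * dist x y ^ r) : UniformContinuousOn f s := by
  have hφ : Tendsto (fun d : ℝ => K * d ^ r) (𝓝 0) (𝓝 0) := by
    simpa [Real.zero_rpow hr.ne'] using
      ((Real.continuousAt_rpow_const 0 r (Or.inr hr.le)).const_mul K).tendsto
  rw [Metric.uniformContinuousOn_iff]
  intro ε hε
  obtain ⟨δ, hδ, hφδ⟩ := Metric.tendsto_nhds_nhds.mp hφ ε hε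
  refine ⟨δ, hδ, fun x hx y hy hxy => (h x hx y hy).trans_lt ?_⟩
  have := hφδ (x := dist x y) (by simpa [Real.dist_eq, abs_of_nonneg dist_nonneg] using hxy)
  exact (le_abs_self _).trans_lt (by simpa [Real.dist_eq] using this)

theorem norm_image_sub_le_of_norm_deriv_le_div_sqrt {G : Type*} [NormedAddCommGroup G]
    [NormedSpace ℝ G] {g g' : ℝ → G} {a b A : ℝ} (hab : a ≤ b) (hg : ContinuousOn g (Icc a b))
    (hg' : ∀ s ∈ Ioc a b, HasDerivAt g (g' s) s) (bound : ∀ s ∈ Ioc a b, ‖g' s‖ ≤ A / √(s - a)) :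
    ‖g b - g a‖ ≤ 2 * A * √(b - a) := by
  -- The comparison theorem wants derivatives on `[a, b)`, so run `g` backwards from `b`; the
  -- reflected bound `A / √(b - u)` is the derivative of `2 A (√(b - a) - √(b - u))`.
  have key := image_norm_le_of_norm_deriv_right_le_deriv_boundary'
    (f := fun u => g (a + b - u) - g b) (f' := fun u => -g' (a + b - u)) (a := a) (b := b)
    (B := fun u => 2 * A * (√(b - a) - √(b - u))) (B' := fun u => A / √(b - u))
    ?_ ?_ ?_ ?_ ?_ ?_ (right_mem_Icc.2 hab)
  · simpa [norm_sub_rev] using key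
  · refine (hg.comp (by fun_prop) fun u hu => ?_).sub continuousOn_const
    constructor <;> linarith [hu.1, hu.2]
  · intro u hu
    have hmem : a + b - u ∈ Ioc a b := by constructor <;> linarith [hu.1, hu.2]
    exact ((hg' _ hmem).comp_const_sub (a + b) u).hasDerivWithinAt.sub_const (g b)
  · simp
  · fun_prop
  · intro u hu
    have hpos : 0 < b - u := by linarith [hu.2]
    have hsqrt := ((Real.hasDerivAt_sqrt hpos.ne').comp_const_sub b u)
    refine (((hsqrt.const_sub √(b - a)).const_mul (2 * A)).congr_deriv ?_).hasDerivWithinAt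
    field_simp
  · intro u hu
    have hmem : a + b - u ∈ Ioc a b := by constructor <;> linarith [hu.1, hu.2]
    simpa [show a + b - u - a = b - u by ring] using bound _ hmem

section

variable {E G : Type*} [NormedAddCommGroup E] [NormedSpace ℝ E] [NormedAddCommGroup G]
  [NormedSpace ℝ G] {D : Set E} {F : E → G} {p x y : E} {ρ C : ℝ}

theorem Convex.ball_lineMap_subset (hconv : Convex ℝ D) (hx : x ∈ D) (hball : ball p ρ ⊆ D)
    {t : ℝ} (ht₀ : 0 < t) (ht₁ : t ≤ 1) : ball (lineMap x p t) (t * ρ) ⊆ D := by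
  intro w hw
  set v := t⁻¹ • (w - lineMap x p t)
  have hv : p + v ∈ D := by
    refine hball ?_
    rw [mem_ball, dist_self_add_left, norm_smul, Real.norm_eq_abs, abs_of_pos (inv_pos.2 ht₀),
      inv_mul_lt_iff₀ ht₀, ← dist_eq_norm]
    exact hw
  have hw_eq : lineMap x (p + v) t = w := by
    simp only [lineMap_apply_module, v, smul_add, smul_smul, mul_inv_cancel₀ ht₀.ne', one_smul]
    abel
  exact hw_eq ▸ hconv.lineMap_mem hx hv ⟨ht₀.le, ht₁⟩

theorem norm_fderiv_le_of_ball_subset (hC : 0 ≤ C)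
    (hder : ∀ x ∈ D, ‖fderiv ℝ F x‖ ≤ C / √(infDist x Dᶜ)) {r : ℝ} (hr : 0 < r)
    (hball : ball x r ⊆ D) : ‖fderiv ℝ F x‖ ≤ C / √r := by
  have hx := hball (mem_ball_self hr)
  rcases Dᶜ.eq_empty_or_nonempty with hempty | hne
  · -- `D = univ`: the junk value `infDist x ∅ = 0` makes the hypothesis say `fderiv ℝ F x = 0`.
    have := hder x hx
    rw [hempty, infDist_empty, Real.sqrt_zero, div_zero] at this
    exact this.trans (by positivity)
  · have hr_le : r ≤ infDist x Dᶜ :=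
      (le_infDist hne).2 fun y hy => not_lt.1 fun hlt => hy (hball (mem_ball'.2 hlt))
    exact (hder x hx).trans (by gcongr)

theorem norm_image_lineMap_sub_le (hconv : Convex ℝ D) (hball : ball p ρ ⊆ D) (hρ : 0 < ρ)
    (hC : 0 ≤ C) (hdiff : ∀ x ∈ D, DifferentiableAt ℝ F x)
    (hder : ∀ x ∈ D, ‖fderiv ℝ F x‖ ≤ C / √(infDist x Dᶜ)) (hx : x ∈ D) {t : ℝ}
    (ht₀ : 0 ≤ t) (ht₁ : t ≤ 1) :
    ‖F (lineMap x p t) - F x‖ ≤ 2 * (C * ‖p - x‖ / √ρ) * √t := by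
  have hp : p ∈ D := hball (mem_ball_self hρ)
  have hmem : ∀ s ∈ Icc 0 t, lineMap x p s ∈ D :=
    fun s hs => hconv.lineMap_mem hx hp ⟨hs.1, hs.2.trans ht₁⟩
  simpa using norm_image_sub_le_of_norm_deriv_le_div_sqrt (g := fun s => F (lineMap x p s))
    (g' := fun s => fderiv ℝ F (lineMap x p s) (p - x)) ht₀
    (fun s hs => (hdiff _ (hmem s hs)).continuousAt.comp_continuousWithinAt
      (lineMap_continuous.continuousWithinAt))
    (fun s hs => (hdiff _ (hmem s (Ioc_subset_Icc_self hs))).hasFDerivAt.comp_hasDerivAt s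
      hasDerivAt_lineMap)
    fun s hs => by
      have hball_s := hconv.ball_lineMap_subset hx hball hs.1 (hs.2.trans ht₁)
      calc ‖fderiv ℝ F (lineMap x p s) (p - x)‖ ≤ ‖fderiv ℝ F (lineMap x p s)‖ * ‖p - x‖ :=
            (fderiv ℝ F _).le_opNorm _
        _ ≤ C / √(s * ρ) * ‖p - x‖ := by
            gcongr
            exact norm_fderiv_le_of_ball_subset hC hder (mul_pos hs.1 hρ) hball_s
        _ = C * ‖p - x‖ / √ρ / √(s - 0) := by
            rw [sub_zero, Real.sqrt_mul hs.1.le]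
            ring

theorem norm_image_lineMap_sub_image_lineMap_le (hconv : Convex ℝ D) (hball : ball p ρ ⊆ D)
    (hρ : 0 < ρ) (hC : 0 ≤ C) (hdiff : ∀ x ∈ D, DifferentiableAt ℝ F x)
    (hder : ∀ x ∈ D, ‖fderiv ℝ F x‖ ≤ C / √(infDist x Dᶜ)) (hx : x ∈ D) (hy : y ∈ D) {t : ℝ}
    (ht₀ : 0 < t) (ht₁ : t ≤ 1) :
    ‖F (lineMap x p t) - F (lineMap y p t)‖ ≤ C / √(t * ρ) * ‖x - y‖ := by
  have hlineMap : ∀ z, homothety p (1 - t) z = lineMap z p t := fun z => by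
    rw [homothety_eq_lineMap, lineMap_apply_one_sub]
  have hK : ∀ z ∈ homothety p (1 - t) '' D, ball z (t * ρ) ⊆ D := by
    rintro _ ⟨w, hw, rfl⟩
    exact hlineMap w ▸ hconv.ball_lineMap_subset hw hball ht₀ ht₁
  have hmvt := (hconv.affine_image (homothety p (1 - t))).norm_image_sub_le_of_norm_fderiv_le
    (fun z hz => hdiff z (hK z hz (mem_ball_self (mul_pos ht₀ hρ))))
    (fun z hz => norm_fderiv_le_of_ball_subset hC hder (mul_pos ht₀ hρ) (hK z hz))
    ⟨y, hy, rfl⟩ ⟨x, hx, rfl⟩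
  simp only [hlineMap] at hmvt
  refine hmvt.trans ?_
  have hdist : lineMap x p t - lineMap y p t = (1 - t) • (x - y) := by
    simp only [lineMap_apply_module]
    module
  rw [hdist, norm_smul, Real.norm_of_nonneg (by linarith)]
  gcongr
  exact mul_le_of_le_one_left (norm_nonneg _) (by linarith)

theorem norm_image_sub_le_mul_sqrt_norm_sub (hconv : Convex ℝ D) (hball : ball p ρ ⊆ D)
    (hρ : 0 < ρ) (hC : 0 ≤ C) (hdiff : ∀ x ∈ D, DifferentiableAt ℝ F x)
    (hder : ∀ x ∈ D, ‖fderiv ℝ F x‖ ≤ C / √(infDist x Dᶜ)) {R : ℝ}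
    (hR : ∀ x ∈ D, ∀ y ∈ D, ‖x - y‖ ≤ R) (hx : x ∈ D) (hy : y ∈ D) :
    ‖F x - F y‖ ≤ 5 * C * √(R / ρ) * √‖x - y‖ := by
  rcases eq_or_ne x y with rfl | hxy
  · simp
  have hp : p ∈ D := hball (mem_ball_self hρ)
  have hd : 0 < ‖x - y‖ := norm_pos_iff.2 (sub_ne_zero.2 hxy)
  have hR₀ : 0 < R := hd.trans_le (hR x hx y hy)
  set t := ‖x - y‖ / R with ht
  have ht₀ : 0 < t := div_pos hd hR₀
  have ht₁ : t ≤ 1 := div_le_one_of_le₀ (hR x hx y hy) hR₀.le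
  have hx' := norm_image_lineMap_sub_le hconv hball hρ hC hdiff hder hx ht₀.le ht₁
  have hy' := norm_image_lineMap_sub_le hconv hball hρ hC hdiff hder hy ht₀.le ht₁
  have hxy' := norm_image_lineMap_sub_image_lineMap_le hconv hball hρ hC hdiff hder hx hy ht₀ ht₁
  have hpx := hR p hp x hx
  have hpy := hR p hp y hy
  calc ‖F x - F y‖
      ≤ ‖F (lineMap x p t) - F x‖ + ‖F (lineMap x p t) - F (lineMap y p t)‖
          + ‖F (lineMap y p t) - F y‖ := by
        have h₁ := norm_sub_le_norm_sub_add_norm_sub (F x) (F (lineMap x p t)) (F y)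
        have h₂ := norm_sub_le_norm_sub_add_norm_sub (F (lineMap x p t)) (F (lineMap y p t)) (F y)
        rw [norm_sub_rev (F x) (F (lineMap x p t))] at h₁
        linarith
    _ ≤ 2 * (C * R / √ρ) * √t + C / √(t * ρ) * ‖x - y‖ + 2 * (C * R / √ρ) * √t :=
        add_le_add_three (hx'.trans (by gcongr)) hxy' (hy'.trans (by gcongr))
    _ = 5 * C * √(R / ρ) * √‖x - y‖ := by
        have hsd := Real.sq_sqrt hd.le
        have hsR := Real.sq_sqrt hR₀.le
        rw [ht, Real.sqrt_mul (div_pos hd hR₀).le, Real.sqrt_div hd.le, Real.sqrt_div hR₀.le]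
        field_simp
        rw [hsd, hsR]
        ring

end

theorem hardy_littlewood_type {N M : ℕ} (D : Set (EuclideanSpace ℝ (Fin N)))
    (hD : IsOpen D) (hconv : Convex ℝ D) (hbdd : Bornology.IsBounded D) (hne : D.Nonempty)
    (F : EuclideanSpace ℝ (Fin N) → EuclideanSpace ℝ (Fin M)) (C : ℝ) (hC : 0 < C)
    (hdiff : ∀ x ∈ D, DifferentiableAt ℝ F x)
    (hder : ∀ x ∈ D, ‖fderiv ℝ F x‖ ≤ C / Real.sqrt (Metric.infDist x Dᶜ)) :
    (∃ G : EuclideanSpace ℝ (Fin N) → EuclideanSpace ℝ (Fin M),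
      ContinuousOn G (closure D) ∧ Set.EqOn G F D) ∧
    ∃ C' > 0, ∀ x ∈ D, ∀ y ∈ D, ‖F x - F y‖ ≤ C' * ‖x - y‖ ^ ((1 : ℝ) / 2) := by
  obtain ⟨p, hp⟩ := hne
  obtain ⟨ρ, hρ, hball⟩ := isOpen_iff.1 hD p hp
  obtain ⟨R, hR₀, hR⟩ : ∃ R > 0, ∀ x ∈ D, ∀ y ∈ D, ‖x - y‖ ≤ R :=
    ⟨diam D + 1, by linarith [diam_nonneg (s := D)], fun x hx y hy => by
      rw [← dist_eq_norm]
      linarith [dist_le_diam_of_mem hbdd hx hy]⟩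
  have hHolder : ∀ x ∈ D, ∀ y ∈ D,
      ‖F x - F y‖ ≤ 5 * C * √(R / ρ) * ‖x - y‖ ^ ((1 : ℝ) / 2) := by
    intro x hx y hy
    rw [← Real.sqrt_eq_rpow]
    exact norm_image_sub_le_mul_sqrt_norm_sub hconv hball hρ hC.le hdiff hder hR hx hy
  refine ⟨UniformContinuousOn.exists_continuousOn_closure_eqOn ?_, 5 * C * √(R / ρ), ?_, hHolder⟩
  · exact uniformContinuousOn_of_dist_le_mul_rpow one_half_pos fun x hx y hy => by
      simpa only [dist_eq_norm] using hHolder x hx y hy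
  · positivity
end

section
/- Let ρ be a negative subharmonic function on the open unit disc Δ ⊂ ℂ, continuous on the closed disc. Suppose ρ ≤ −C < 0 on the set {z ∈ Δ : |z| ≤ 1/2}. Then for every z ∈ Δ with 1/2 ≤ |z| < 1, ρ(z) ≤ −(C/4)·(1 − |z|). -/
/-!
Compare `ρ` on the closed annulus `1/2 ≤ |w| ≤ 1` with the barrier
`h(w) = C (log |w| + (1 - |w|²)/4)`. The logarithm is harmonic, so `h ≥ ρ` on both boundary
circles (`h = 0` on the outer one, `h ≥ -C` on the inner one since `log 2 < 19/16`), while the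
term `-C|w|²/4` makes `h` strictly superharmonic: its circle averages drop by `C s²/4`. Hence at an
interior maximum of `ρ - h` the sub-mean-value property of `ρ` would be violated, so `ρ ≤ h` on the
annulus, and `log r ≤ r - 1` turns this into `ρ ≤ -(C/2)(1 - |w|)`.
-/

open Metric Real Set ComplexConjugate

lemma closedBall_sdiff_ball_sdiff_sphere_union_sphere {α : Type*} [PseudoMetricSpace α] {x : α}
    {r R : ℝ} :
    (closedBall x R \ ball x r) \ (sphere x r ∪ sphere x R) = ball x R \ closedBall x r := by
  ext w
  simp only [mem_sdiff, mem_closedBall, mem_ball, mem_union, mem_sphere]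
  grind

theorem IsCompact.le_of_lt_circleAverage {K B : Set ℂ} {g : ℂ → ℝ} {M : ℝ} (hK : IsCompact K)
    (hg : ContinuousOn g K) (hB : ∀ z ∈ B, g z ≤ M)
    (hlt : ∀ z ∈ K \ B, ∃ s, sphere z |s| ⊆ K ∧ g z < circleAverage g z s) :
    ∀ z ∈ K, g z ≤ M := by
  intro z hz
  obtain ⟨z₀, hz₀, hmax⟩ := hK.exists_isMaxOn ⟨z, hz⟩ hg
  refine (hmax hz).trans ?_
  by_contra! hM
  obtain ⟨s, hsK, hs⟩ := hlt z₀ ⟨hz₀, fun hB₀ ↦ (hB z₀ hB₀).not_gt hM⟩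
  exact hs.not_ge <| circleAverage_mono_on_of_le_circle
    ((hg.mono hsK).circleIntegrable') fun w hw ↦ hmax (hsK hw)

lemma circleAverage_log_norm {c : ℂ} {R : ℝ} (hR : |R| < ‖c‖) :
    circleAverage (fun w ↦ log ‖w‖) c R = log ‖c‖ :=
  InnerProductSpace.HarmonicOnNhd.circleAverage_eq fun w hw ↦
    (analyticAt_id (z := w)).harmonicAt_log_norm <| by
      rintro rfl
      simp only [mem_closedBall, dist_zero_left] at hw
      linarith

lemma circleAverage_norm_sq (c : ℂ) (R : ℝ) :
    circleAverage (fun w ↦ ‖w‖ ^ 2) c R = ‖c‖ ^ 2 + R ^ 2 := by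
  -- on the circle `‖w‖² = R² - ‖c‖² + 2 Re (c̄ w)`, a harmonic function
  have hsphere : EqOn (fun w ↦ ‖w‖ ^ 2)
      (fun w ↦ (((R ^ 2 - ‖c‖ ^ 2 : ℝ) : ℂ) + 2 * conj c * w).re) (sphere c |R|) := by
    intro w hw
    have hw' : ‖w - c‖ ^ 2 = R ^ 2 := by simp [mem_sphere_iff_norm.1 hw]
    simp only [← Complex.normSq_eq_norm_sq, Complex.normSq_apply, Complex.add_re,
      Complex.ofReal_re, Complex.mul_re, Complex.sub_re, Complex.sub_im, Complex.conj_re,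
      Complex.conj_im] at hw' ⊢
    norm_num
    linarith
  rw [circleAverage_congr_sphere hsphere, InnerProductSpace.HarmonicOnNhd.circleAverage_eq
    fun w _ ↦ (by fun_prop : AnalyticAt ℂ _ w).harmonicAt_re]
  simp only [Complex.add_re, Complex.ofReal_re, Complex.mul_re, Complex.conj_re, Complex.conj_im]
  simp [← Complex.normSq_eq_norm_sq, Complex.normSq_apply]
  ring

noncomputable def hopfBarrier (C : ℝ) (w : ℂ) : ℝ := C * (log ‖w‖ + (1 - ‖w‖ ^ 2) / 4)

lemma continuousOn_hopfBarrier (C : ℝ) : ContinuousOn (hopfBarrier C) {0}ᶜ := by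
  unfold hopfBarrier
  fun_prop (disch := aesop)

lemma hopfBarrier_of_norm_eq_one (C : ℝ) {w : ℂ} (hw : ‖w‖ = 1) : hopfBarrier C w = 0 := by
  simp [hopfBarrier, hw]

lemma neg_le_hopfBarrier_of_norm_eq_half {C : ℝ} (hC : 0 ≤ C) {w : ℂ} (hw : ‖w‖ = 1 / 2) :
    -C ≤ hopfBarrier C w := by
  have hlog : log ‖w‖ = -log 2 := by rw [hw, one_div, log_inv]
  have := log_two_lt_d9
  rw [hopfBarrier, hlog, hw]
  nlinarith

lemma hopfBarrier_le {C : ℝ} (hC : 0 ≤ C) {w : ℂ} (hw₀ : w ≠ 0) (hw₁ : ‖w‖ ≤ 1) :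
    hopfBarrier C w ≤ -(C / 2) * (1 - ‖w‖) := by
  have hlog : log ‖w‖ ≤ ‖w‖ - 1 := log_le_sub_one_of_pos (norm_pos_iff.2 hw₀)
  have hsq : (1 - ‖w‖ ^ 2) / 4 ≤ (1 - ‖w‖) / 2 := by nlinarith [norm_nonneg w]
  calc hopfBarrier C w ≤ C * (‖w‖ - 1 + (1 - ‖w‖) / 2) := by
        unfold hopfBarrier; gcongr
    _ = -(C / 2) * (1 - ‖w‖) := by ring

lemma circleIntegrable_hopfBarrier (C : ℝ) {z : ℂ} {s : ℝ} (hs : |s| < ‖z‖) :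
    CircleIntegrable (hopfBarrier C) z s :=
  ((continuousOn_hopfBarrier C).mono fun w hw h0 ↦ by
    simp_all [mem_sphere_iff_norm]).circleIntegrable'

lemma circleAverage_hopfBarrier (C : ℝ) {z : ℂ} {s : ℝ} (hs : |s| < ‖z‖) :
    circleAverage (hopfBarrier C) z s = hopfBarrier C z - C * s ^ 2 / 4 := by
  have hlog : CircleIntegrable (fun w ↦ log ‖w‖) z s := by
    simpa using circleIntegrable_log_norm_sub_const (a := 0) (c := z) s
  have hsq : CircleIntegrable (fun w ↦ ‖w‖ ^ 2) z s :=
    (continuous_norm.pow 2).continuousOn.circleIntegrable'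
  have : hopfBarrier C = fun w ↦ C • (log ‖w‖ + (4 : ℝ)⁻¹ • (1 - ‖w‖ ^ 2)) := by
    ext w; simp only [hopfBarrier, smul_eq_mul]; ring
  rw [this, circleAverage_fun_smul, circleAverage_fun_add hlog
      (by fun_prop : Continuous fun w : ℂ ↦ (4 : ℝ)⁻¹ • (1 - ‖w‖ ^ 2)).continuousOn.circleIntegrable',
    circleAverage_fun_smul, circleAverage_fun_sub (circleIntegrable_const 1 z s) hsq,
    circleAverage_const, circleAverage_log_norm hs, circleAverage_norm_sq]
  simp only [smul_eq_mul]
  ring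

lemma sub_hopfBarrier_lt_circleAverage {ρ : ℂ → ℝ} {C : ℝ} (hC : 0 < C) {z : ℂ} {s : ℝ}
    (hs : 0 < s) (hsz : s < ‖z‖) (hρ : CircleIntegrable ρ z s)
    (hmean : ρ z ≤ circleAverage ρ z s) :
    (ρ - hopfBarrier C) z < circleAverage (ρ - hopfBarrier C) z s := by
  rw [← abs_of_pos hs] at hsz
  rw [circleAverage_sub hρ (circleIntegrable_hopfBarrier C hsz), circleAverage_hopfBarrier C hsz,
    Pi.sub_apply]
  linarith [mul_pos hC (pow_pos hs 2)]

lemma le_hopfBarrier_of_mem_annulus {ρ : ℂ → ℝ} {C : ℝ} (hC : 0 < C)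
    (hcont : ContinuousOn ρ (closedBall 0 1))
    (hmean : ∀ w ∈ ball (0 : ℂ) 1, ∀ s > 0, closedBall w s ⊆ ball 0 1 →
      ρ w ≤ circleAverage ρ w s)
    (hinner : ∀ w ∈ sphere (0 : ℂ) (1 / 2), ρ w ≤ -C) (houter : ∀ w ∈ sphere (0 : ℂ) 1, ρ w ≤ 0) :
    ∀ w ∈ closedBall (0 : ℂ) 1 \ ball 0 (1 / 2), ρ w ≤ hopfBarrier C w := by
  set K := closedBall (0 : ℂ) 1 \ ball 0 (1 / 2)
  have hK : K ⊆ {0}ᶜ := fun w hw h0 ↦ hw.2 (h0 ▸ mem_ball_self (by norm_num))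
  have hUK : ball (0 : ℂ) 1 \ closedBall 0 (1 / 2) ⊆ K :=
    sdiff_subset_sdiff ball_subset_closedBall ball_subset_closedBall
  suffices ∀ w ∈ K, (ρ - hopfBarrier C) w ≤ 0 from fun w hw ↦ sub_nonpos.1 (this w hw)
  refine ((isCompact_closedBall _ _).diff isOpen_ball).le_of_lt_circleAverage
    (B := sphere 0 (1 / 2) ∪ sphere 0 1)
    ((hcont.mono sdiff_subset).sub ((continuousOn_hopfBarrier C).mono hK)) ?_ ?_
  · rintro w (hw | hw) <;> rw [Pi.sub_apply, sub_nonpos]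
    · exact (hinner w hw).trans
        (neg_le_hopfBarrier_of_norm_eq_half hC.le (mem_sphere_zero_iff_norm.1 hw))
    · exact (houter w hw).trans_eq
        (hopfBarrier_of_norm_eq_one C (mem_sphere_zero_iff_norm.1 hw)).symm
  · intro w hw
    rw [closedBall_sdiff_ball_sdiff_sphere_union_sphere] at hw
    obtain ⟨s, hs, hsU⟩ := nhds_basis_closedBall.mem_iff.1
      ((isOpen_ball.sdiff isClosed_closedBall).mem_nhds hw)
    have hsK : sphere w |s| ⊆ K := by
      rw [abs_of_pos hs]
      exact sphere_subset_closedBall.trans (hsU.trans hUK)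
    have hsw : s < ‖w‖ := by
      by_contra! h
      exact hK (hUK (hsU (mem_closedBall_comm.1 (by simpa using h)))) rfl
    exact ⟨s, hsK, sub_hopfBarrier_lt_circleAverage hC hs hsw
      ((hcont.mono (hsK.trans sdiff_subset)).circleIntegrable')
      (hmean w hw.1 s hs (hsU.trans sdiff_subset))⟩

theorem hopf_lemma_disc (ρ : ℂ → ℝ)
    (hcont : ContinuousOn ρ (Metric.closedBall (0 : ℂ) 1))
    (hsub : ∀ z ∈ Metric.ball (0 : ℂ) 1, ∀ s : ℝ, 0 < s →
      Metric.closedBall z s ⊆ Metric.ball (0 : ℂ) 1 →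
      ρ z ≤ (1 / (2 * Real.pi)) *
        ∫ t in (0 : ℝ)..(2 * Real.pi), ρ (z + (s : ℂ) * Complex.exp ((t : ℂ) * Complex.I)))
    (hneg : ∀ z ∈ Metric.ball (0 : ℂ) 1, ρ z < 0)
    (C : ℝ) (hC : 0 < C)
    (hbound : ∀ z : ℂ, ‖z‖ ≤ 1 / 2 → ρ z ≤ -C) :
    ∀ z : ℂ, 1 / 2 ≤ ‖z‖ → ‖z‖ < 1 →
      ρ z ≤ -(C / 4) * (1 - ‖z‖) := by
  have hmean : ∀ w ∈ ball (0 : ℂ) 1, ∀ s > 0, closedBall w s ⊆ ball 0 1 →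
      ρ w ≤ circleAverage ρ w s := fun w hw s hs hws ↦
    (hsub w hw s hs hws).trans_eq (by rw [circleAverage_def, smul_eq_mul, one_div]; rfl)
  have houter : ∀ w ∈ sphere (0 : ℂ) 1, ρ w ≤ 0 := by
    rw [← closure_ball (0 : ℂ) one_ne_zero] at hcont
    exact fun w hw ↦ le_on_closure (fun w hw ↦ (hneg w hw).le) hcont continuousOn_const
      (closure_ball (0 : ℂ) one_ne_zero ▸ sphere_subset_closedBall hw)
  have hinner : ∀ w ∈ sphere (0 : ℂ) (1 / 2), ρ w ≤ -C :=
    fun w hw ↦ hbound w (mem_sphere_zero_iff_norm.1 hw).le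
  intro z hz₁ hz₂
  have hzK : z ∈ closedBall (0 : ℂ) 1 \ ball 0 (1 / 2) :=
    ⟨mem_closedBall_zero_iff.2 hz₂.le, fun h ↦ (mem_ball_zero_iff.1 h).not_ge hz₁⟩
  calc ρ z ≤ hopfBarrier C z := le_hopfBarrier_of_mem_annulus hC hcont hmean hinner houter z hzK
    _ ≤ -(C / 2) * (1 - ‖z‖) :=
      hopfBarrier_le hC.le (norm_pos_iff.1 (by linarith)) hz₂.le
    _ ≤ -(C / 4) * (1 - ‖z‖) := by nlinarith
end
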